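/- Let G be a compact Lie group with bi-invariant metric and {r^a}, {l^a} the right- and left-invariant orthonormal coframes. For 1-forms ω = (ω_R)_a r^a and ω̃ = (ω̃_L)_a l^a on G, the RL-convolution ω ⊗_{RL} ω̃ := ∫_G 𝔯_g(ω) ⊗ L_{g⁻¹}* ω̃ dg equals ((ω_R)_a ∗_{RL} (ω̃_L)_b) r^a ⊗ l^b, i.e. the tensor convolution reduces to the scalar convolution of the components in the mixed right/left-invariant bases. -/

import Mathlib

/-!
Right-invariance of the `r^a` and left-invariance of the `l^a` mean that `𝔯_g` and `L_{g⁻¹}^*`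
only move the components: `(𝔯_g ω)|_x = (ω_R)_a(g) r^a|_x` and
`(L_{g⁻¹}^* ω̃)|_x = (ω̃_L)_b(g⁻¹x) l^b|_x`. The integrand of `ω ⊗_{RL} ω̃` is therefore a finite
double sum of continuous functions on a compact group, which can be integrated term by term.
-/

open MeasureTheory
open scoped Manifold

variable {E : Type*} [NormedAddCommGroup E] [NormedSpace ℝ E]
  {G : Type*} [TopologicalSpace G] [ChartedSpace E G] [Group G] [IsTopologicalGroup G]
  (I : ModelWithCorners ℝ E E) [LieGroup I (⊤ : ℕ∞) G]
  [CompactSpace G] [MeasurableSpace G] [BorelSpace G]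

/-- The right-invariant extension map on 1-forms:
`(𝔯_g ω)|_{g'} := (R_{g'⁻¹g})^* ω|_{g'}`, i.e. `(𝔯_g ω)_{g'}(u) = ω_g(d(R_{g'⁻¹g})_{g'} u)`,
where a 1-form is encoded as a family `G → (E → ℝ)` on the (trivialized) tangent spaces. -/
noncomputable def frakr1 (g : G) (ω : G → E → ℝ) : G → E → ℝ :=
  fun g' u => ω g (mfderiv I I (fun x => x * (g'⁻¹ * g)) g' u)

/-- Pull-back of a 1-form along the left translation `L_{g⁻¹}`:
`(L_{g⁻¹}^* ω)|_x(u) = ω|_{g⁻¹x}(d(L_{g⁻¹})_x u)`. -/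
noncomputable def pbL1 (g : G) (ω : G → E → ℝ) : G → E → ℝ :=
  fun x u => ω (g⁻¹ * x) (mfderiv I I (fun y => g⁻¹ * y) x u)

/-- The RL-convolution of two 1-forms: `(ω ⊗_{RL} ω̃)|_x := ∫ (𝔯_g ω)|_x ⊗ (L_{g⁻¹}^* ω̃)|_x dg`. -/
noncomputable def convRL1 (μ : Measure G) (ω ωt : G → E → ℝ) : G → E → E → ℝ :=
  fun x u w => ∫ g, frakr1 I g ω x u * pbL1 I g ωt x w ∂μ

section

-- A group type other than `G`, so that the Lie group assumptions on `G` are not included.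
variable {H : Type*} [TopologicalSpace H] [ChartedSpace E H] [Group H]

theorem frakr1_apply_of_expansion {n : ℕ} {r : Fin n → H → E → ℝ}
    (hr : ∀ g a, frakr1 I g (r a) = r a) {f : Fin n → H → ℝ} {ω : H → E → ℝ}
    (hω : ∀ x u, ω x u = ∑ a, f a x * r a x u) (g x : H) (u : E) :
    frakr1 I g ω x u = ∑ a, f a g * r a x u :=
  (hω g _).trans <| Finset.sum_congr rfl fun a _ =>
    congrArg (f a g * ·) (congrFun₂ (hr g a) x u)

theorem pbL1_apply_of_expansion {n : ℕ} {l : Fin n → H → E → ℝ}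
    (hl : ∀ g a, pbL1 I g (l a) = l a) {f : Fin n → H → ℝ} {ω : H → E → ℝ}
    (hω : ∀ x u, ω x u = ∑ a, f a x * l a x u) (g x : H) (u : E) :
    pbL1 I g ω x u = ∑ a, f a (g⁻¹ * x) * l a x u :=
  (hω _ _).trans <| Finset.sum_congr rfl fun a _ =>
    congrArg (f a (g⁻¹ * x) * ·) (congrFun₂ (hl g a) x u)

variable [MeasurableSpace H]

noncomputable def convRL (μ : Measure H) (f h : H → ℝ) (x : H) : ℝ :=
  ∫ g, f g * h (g⁻¹ * x) ∂μ

theorem integrable_mul_comp_inv_mul [IsTopologicalGroup H] [CompactSpace H]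
    [OpensMeasurableSpace H] (μ : Measure H) [IsFiniteMeasure μ] {f h : H → ℝ}
    (hf : Continuous f) (hh : Continuous h) (x : H) :
    Integrable (fun g => f g * h (g⁻¹ * x)) μ :=
  (hf.mul (hh.comp (continuous_inv.mul continuous_const))).integrable_of_hasCompactSupport
    (HasCompactSupport.of_compactSpace _)

theorem convRL1_eq_sum_convRL [IsTopologicalGroup H] [CompactSpace H] [OpensMeasurableSpace H]
    (μ : Measure H) [IsFiniteMeasure μ] {n : ℕ}
    {r l : Fin n → H → E → ℝ} (hr : ∀ g a, frakr1 I g (r a) = r a)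
    (hl : ∀ g a, pbL1 I g (l a) = l a) {f h : Fin n → H → ℝ}
    (hf : ∀ a, Continuous (f a)) (hh : ∀ a, Continuous (h a)) {ω ωt : H → E → ℝ}
    (hω : ∀ x u, ω x u = ∑ a, f a x * r a x u) (hωt : ∀ x u, ωt x u = ∑ a, h a x * l a x u)
    (x : H) (u w : E) :
    convRL1 I μ ω ωt x u w = ∑ a, ∑ b, convRL μ (f a) (h b) x * (r a x u * l b x w) := by
  have hint a b : Integrable (fun g => f a g * h b (g⁻¹ * x) * (r a x u * l b x w)) μ :=
    (integrable_mul_comp_inv_mul μ (hf a) (hh b) x).mul_const _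
  calc convRL1 I μ ω ωt x u w
      = ∫ g, ∑ a, ∑ b, f a g * h b (g⁻¹ * x) * (r a x u * l b x w) ∂μ := by
        refine integral_congr_ae (.of_forall fun g => ?_)
        dsimp only
        rw [frakr1_apply_of_expansion I hr hω, pbL1_apply_of_expansion I hl hωt,
          Finset.sum_mul_sum]
        exact Finset.sum_congr rfl fun a _ => Finset.sum_congr rfl fun b _ => by ring
    _ = ∑ a, ∑ b, convRL μ (f a) (h b) x * (r a x u * l b x w) := by
        rw [integral_finsetSum _ fun a _ => integrable_finsetSum _ fun b _ => hint a b]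
        refine Finset.sum_congr rfl fun a _ => ?_
        rw [integral_finsetSum _ fun b _ => hint a b]
        exact Finset.sum_congr rfl fun b _ => integral_mul_const _ _

end

theorem convRL1_components
    (μ : Measure G) [IsProbabilityMeasure μ]
    (n : ℕ) (r l : Fin n → (G → E → ℝ))
    (hrInv : ∀ (g : G) (a : Fin n), frakr1 I g (r a) = r a)
    (hlInv : ∀ (g : G) (a : Fin n), pbL1 I g (l a) = l a)
    (ωR ωtL : Fin n → G → ℝ)
    (hωRsmooth : ∀ a, ContMDiff I 𝓘(ℝ, ℝ) (⊤ : ℕ∞) (ωR a))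
    (hωtLsmooth : ∀ a, ContMDiff I 𝓘(ℝ, ℝ) (⊤ : ℕ∞) (ωtL a))
    (ω ωt : G → E → ℝ)
    (hω : ∀ (x : G) (u : E), ω x u = ∑ a, ωR a x * r a x u)
    (hωt : ∀ (x : G) (u : E), ωt x u = ∑ a, ωtL a x * l a x u)
    (x : G) (u w : E) :
    convRL1 I μ ω ωt x u w =
      ∑ a, ∑ b, (∫ g, ωR a g * ωtL b (g⁻¹ * x) ∂μ) * (r a x u * l b x w) :=
  convRL1_eq_sum_convRL I μ hrInv hlInv (fun a => (hωRsmooth a).continuous)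
    (fun a => (hωtLsmooth a).continuous) hω hωt x u w
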